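/- Semi-discrete Scharfetter-Gummel energy dissipation, generalized Keller-Segel case: let K ∈ ℝ^{I×I} be symmetric, suppose u_1,...,u_I : J → ℝ are differentiable on the open interval J, set v_i(t) = Σ_{j=1}^I K_{ij} u_j(t), and suppose u solves u_i'(t) + (1/Δx)(F_{i+1/2}(t) − F_{i−1/2}(t)) = 0 for i = 1,...,I, where F_{1/2} = F_{I+1/2} = 0 and, for 1 ≤ i ≤ I−1, F_{i+1/2}(t) = −(c_{i+1/2}(t)/Δx)[ exp(g(u_{i+1}(t)) − v_{i+1}(t)) − exp(g(u_i(t)) − v_i(t)) ] with nonnegative functions c_{i+1/2}. Then, writing x_i(t) = g(u_i(t)) − v_i(t), for every t ∈ J, (d/dt)[ Δx Σ_{i=1}^I ( G(u_i(t)) − (1/2) u_i(t) v_i(t) ) ] = −(1/Δx) Σ_{i=1}^{I−1} c_{i+1/2}(t) ( exp(x_{i+1}(t)) − exp(x_i(t)) ) ( x_{i+1}(t) − x_i(t) ), which is ≤ 0. -/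

import Mathlib

/-!
The Scharfetter–Gummel scheme is a discrete gradient flow of the free energy
`Δx ∑ᵢ (G(uᵢ) - ½ uᵢ vᵢ)`. Since `K` is symmetric, the time derivative of the interaction part
`½ ∑ᵢ uᵢ vᵢ` is `∑ᵢ uᵢ' vᵢ`, so the energy changes at the rate `∑ᵢ xᵢ uᵢ'` with the chemical
potential `xᵢ = g(uᵢ) - vᵢ`. Inserting the flux form of the scheme and summing by parts (the
boundary fluxes vanish) turns this into `-(1/Δx) ∑ᵢ cᵢ₊½ (exp xᵢ₊₁ - exp xᵢ)(xᵢ₊₁ - xᵢ)`, which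
is nonpositive because `exp` is monotone.
-/

open Finset

section SummationByParts

variable {R : Type*} [CommRing R]

theorem sum_Icc_mul_sub_pred_eq (N : ℕ) (x f : ℕ → R) :
    ∑ i ∈ Icc 1 (N + 1), x i * (f i - f (i - 1)) =
      x (N + 1) * f (N + 1) - x 1 * f 0 - ∑ i ∈ Icc 1 N, (x (i + 1) - x i) * f i := by
  induction N with
  | zero => simp [mul_sub]
  | succ n ih =>
    rw [sum_Icc_succ_top (by omega), ih, sum_Icc_succ_top (by omega)]
    simp only [Nat.add_sub_cancel]
    ring

theorem sum_Icc_mul_sub_pred_eq_neg_sum_of_boundary (N : ℕ) (x f : ℕ → R) (h0 : f 0 = 0)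
    (hN : f N = 0) :
    ∑ i ∈ Icc 1 N, x i * (f i - f (i - 1)) = -∑ i ∈ Icc 1 (N - 1), (x (i + 1) - x i) * f i := by
  cases N with
  | zero => simp
  | succ M => rw [sum_Icc_mul_sub_pred_eq, h0, hN, Nat.add_sub_cancel]; ring

end SummationByParts

theorem sum_mul_sum_kernel_comm {ι R : Type*} [CommSemiring R] (s : Finset ι) {K : ι → ι → R}
    (hK : ∀ i j, K i j = K j i) (a b : ι → R) :
    ∑ i ∈ s, a i * ∑ j ∈ s, K i j * b j = ∑ i ∈ s, b i * ∑ j ∈ s, K i j * a j := by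
  simp_rw [mul_sum]
  rw [sum_comm]
  refine sum_congr rfl fun i _ => sum_congr rfl fun j _ => ?_
  rw [hK]
  ring

section FreeEnergy

variable {ι : Type*} {s : Finset ι} {K : ι → ι → ℝ} {u v : ι → ℝ → ℝ} {u' : ι → ℝ} {t : ℝ}

theorem hasDerivAt_half_sum_mul_kernel (hK : ∀ i j, K i j = K j i)
    (hv : ∀ i τ, v i τ = ∑ j ∈ s, K i j * u j τ) (hu : ∀ i ∈ s, HasDerivAt (u i) (u' i) t) :
    HasDerivAt (fun τ => ∑ i ∈ s, (1 / 2) * u i τ * v i τ) (∑ i ∈ s, u' i * v i t) t := by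
  have hv' : ∀ i, HasDerivAt (v i) (∑ j ∈ s, K i j * u' j) t := fun i => by
    rw [funext (hv i)]
    exact HasDerivAt.fun_sum fun j hj => (hu j hj).const_mul _
  refine (HasDerivAt.fun_sum fun i hi =>
    ((hu i hi).const_mul (1 / 2 : ℝ)).mul (hv' i)).congr_deriv ?_
  have hsym : ∑ i ∈ s, u i t * ∑ j ∈ s, K i j * u' j = ∑ i ∈ s, u' i * v i t := by
    simp only [hv]
    exact sum_mul_sum_kernel_comm s hK _ _
  simp only [sum_add_distrib, mul_assoc, ← mul_sum, hsym]
  ring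

theorem hasDerivAt_sum_free_energy {g G : ℝ → ℝ} (hG : ∀ x, HasDerivAt G (g x) x)
    (hK : ∀ i j, K i j = K j i) (hv : ∀ i τ, v i τ = ∑ j ∈ s, K i j * u j τ)
    (hu : ∀ i ∈ s, HasDerivAt (u i) (u' i) t) :
    HasDerivAt (fun τ => ∑ i ∈ s, (G (u i τ) - (1 / 2) * u i τ * v i τ))
      (∑ i ∈ s, (g (u i t) - v i t) * u' i) t := by
  simp only [sum_sub_distrib]
  refine ((HasDerivAt.fun_sum fun i hi => (hG (u i t)).comp t (hu i hi)).sub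
    (hasDerivAt_half_sum_mul_kernel hK hv hu)).congr_deriv ?_
  rw [← sum_sub_distrib]
  exact sum_congr rfl fun i _ => by ring

end FreeEnergy

theorem semidiscrete_scharfetter_gummel_energy_dissipation_GKS_general
    (I : ℕ) (hI : 1 ≤ I) (Δx : ℝ) (hΔx : Δx = 1 / (I : ℝ))
    (J : Set ℝ)
    (g G : ℝ → ℝ) (hG : ∀ x : ℝ, HasDerivAt G (g x) x)
    (K : ℕ → ℕ → ℝ) (hK : ∀ i j, K i j = K j i)
    (u : ℕ → ℝ → ℝ) (c : ℕ → ℝ → ℝ)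
    (v : ℕ → ℝ → ℝ)
    (hv : ∀ i, ∀ t : ℝ, v i t = ∑ j ∈ Finset.Icc 1 I, K i j * u j t)
    (hc : ∀ i, ∀ t ∈ J, 0 ≤ c i t)
    (F : ℕ → ℝ → ℝ)
    (hF0 : ∀ t, F 0 t = 0) (hFI : ∀ t, F I t = 0)
    (hF : ∀ i ∈ Finset.Icc 1 (I - 1), ∀ t ∈ J,
      F i t = -(c i t / Δx) *
        (Real.exp (g (u (i + 1) t) - v (i + 1) t) - Real.exp (g (u i t) - v i t)))
    (hode : ∀ i ∈ Finset.Icc 1 I, ∀ t ∈ J,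
      HasDerivAt (u i) (-(1 / Δx) * (F i t - F (i - 1) t)) t) :
    ∀ t ∈ J,
      HasDerivAt
        (fun s => Δx * ∑ i ∈ Finset.Icc 1 I, (G (u i s) - (1 / 2) * u i s * v i s))
        (-(1 / Δx) * ∑ i ∈ Finset.Icc 1 (I - 1),
          c i t * (Real.exp (g (u (i + 1) t) - v (i + 1) t) - Real.exp (g (u i t) - v i t))
            * ((g (u (i + 1) t) - v (i + 1) t) - (g (u i t) - v i t))) t
      ∧ -(1 / Δx) * ∑ i ∈ Finset.Icc 1 (I - 1),
          c i t * (Real.exp (g (u (i + 1) t) - v (i + 1) t) - Real.exp (g (u i t) - v i t))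
            * ((g (u (i + 1) t) - v (i + 1) t) - (g (u i t) - v i t)) ≤ 0 := by
  intro t ht
  have hΔ : 0 < Δx := by rw [hΔx]; exact one_div_pos.2 (by exact_mod_cast hI)
  set x : ℕ → ℝ := fun i => g (u i t) - v i t
  have hE := (hasDerivAt_sum_free_energy hG hK hv fun i hi => hode i hi t ht).const_mul Δx
  have hrate : Δx * ∑ i ∈ Icc 1 I, x i * (-(1 / Δx) * (F i t - F (i - 1) t)) =
      -(1 / Δx) * ∑ i ∈ Icc 1 (I - 1),
        c i t * (Real.exp (x (i + 1)) - Real.exp (x i)) * (x (i + 1) - x i) := by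
    have hcancel : Δx * ∑ i ∈ Icc 1 I, x i * (-(1 / Δx) * (F i t - F (i - 1) t)) =
        -∑ i ∈ Icc 1 I, x i * (F i t - F (i - 1) t) := by
      rw [mul_sum, ← sum_neg_distrib]
      exact sum_congr rfl fun i _ => by field_simp
    rw [hcancel, sum_Icc_mul_sub_pred_eq_neg_sum_of_boundary I x (F · t) (hF0 t) (hFI t),
      neg_neg, mul_sum]
    refine sum_congr rfl fun i hi => ?_
    rw [hF i hi t ht]
    ring
  refine ⟨hE.congr_deriv hrate, mul_nonpos_of_nonpos_of_nonneg (by simpa using hΔ.le) ?_⟩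
  refine sum_nonneg fun i _ => ?_
  rw [mul_assoc]
  exact mul_nonneg (hc i t ht)
    ((Real.exp_monotone.monovary monotone_id).sub_mul_sub_nonneg (x i) (x (i + 1)))

/-- semi-discrete Scharfetter-Gummel energy dissipation,
generalized Keller-Segel case. -/
theorem semidiscrete_scharfetter_gummel_energy_dissipation_GKS
    (I : ℕ) (hI : 1 ≤ I) (Δx : ℝ) (hΔx : Δx = 1 / (I : ℝ))
    (J : Set ℝ) (hJopen : IsOpen J) (hJconn : J.OrdConnected)
    (g G : ℝ → ℝ) (hG : ∀ x : ℝ, HasDerivAt G (g x) x)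
    (K : ℕ → ℕ → ℝ) (hK : ∀ i j, K i j = K j i)
    (u : ℕ → ℝ → ℝ) (c : ℕ → ℝ → ℝ)
    (v : ℕ → ℝ → ℝ)
    (hv : ∀ i, ∀ t : ℝ, v i t = ∑ j ∈ Finset.Icc 1 I, K i j * u j t)
    (hc : ∀ i, ∀ t ∈ J, 0 ≤ c i t)
    (F : ℕ → ℝ → ℝ)
    (hF0 : ∀ t, F 0 t = 0) (hFI : ∀ t, F I t = 0)
    (hF : ∀ i ∈ Finset.Icc 1 (I - 1), ∀ t ∈ J,
      F i t = -(c i t / Δx) *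
        (Real.exp (g (u (i + 1) t) - v (i + 1) t) - Real.exp (g (u i t) - v i t)))
    (hode : ∀ i ∈ Finset.Icc 1 I, ∀ t ∈ J,
      HasDerivAt (u i) (-(1 / Δx) * (F i t - F (i - 1) t)) t) :
    ∀ t ∈ J,
      HasDerivAt
        (fun s => Δx * ∑ i ∈ Finset.Icc 1 I, (G (u i s) - (1 / 2) * u i s * v i s))
        (-(1 / Δx) * ∑ i ∈ Finset.Icc 1 (I - 1),
          c i t * (Real.exp (g (u (i + 1) t) - v (i + 1) t) - Real.exp (g (u i t) - v i t))
            * ((g (u (i + 1) t) - v (i + 1) t) - (g (u i t) - v i t))) t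
      ∧ -(1 / Δx) * ∑ i ∈ Finset.Icc 1 (I - 1),
          c i t * (Real.exp (g (u (i + 1) t) - v (i + 1) t) - Real.exp (g (u i t) - v i t))
            * ((g (u (i + 1) t) - v (i + 1) t) - (g (u i t) - v i t)) ≤ 0 :=
  semidiscrete_scharfetter_gummel_energy_dissipation_GKS_general I hI Δx hΔx J g G hG K hK u c v hv
    hc F hF0 hFI hF hode
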